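/- Let T = F(a,b) × F(c,d) be the direct product of two free groups of rank 2, and let S be the subgroup of T generated by a, bc, and d. Then S is a normal subgroup of T, the quotient T/S is infinite cyclic, and S is not finitely presented. In particular, the finitely presented group T is not coherent. -/

import Mathlib

/-- A group is finitely presented if it is the quotient of a finitely generated free group
by the normal closure of a finite set. -/
def Group.IsFinitelyPresented' (A : Type*) [Group A] : Prop :=
  ∃ (n : ℕ) (π : FreeGroup (Fin n) →* A), Function.Surjective π ∧
    ∃ s : Finset (FreeGroup (Fin n)), Subgroup.normalClosure ↑s = π.ker

/-- Stallings' subgroup `S = ⟨a, bc, d⟩` of `T = F(a,b) × F(c,d)`. -/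
def stallingsSubgroup : Subgroup (FreeGroup (Fin 2) × FreeGroup (Fin 2)) :=
  Subgroup.closure {(FreeGroup.of 0, 1), (FreeGroup.of 1, FreeGroup.of 0), (1, FreeGroup.of 1)}

/-!
The map `T → ℤ` sending `a, d ↦ 0`, `b ↦ 1` and `c ↦ -1` is onto with kernel `S`. Since `F(a, b)` is the
semidirect product `F(ℤ) ⋊ ℤ`, free on the conjugates `bⁱ a b⁻ⁱ` with `b` acting by shifting the
index, `S` is `(F(ℤ) × F(ℤ)) ⋊ ℤ` with the diagonal shift, and so has the presentation
`⟨x, t, y | [tⁱ x t⁻ⁱ, y], i ∈ ℤ⟩` for `x ↦ a`, `t ↦ bc`, `y ↦ d`. No finitely many of these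
relators suffice: the action of `x, t, y` on `ℤ` by `(0 1)`, `k ↦ k + 1` and `(n+2 n+3)` satisfies
the relators with `i ≤ n` but not the one with `i = n + 1`. As finite presentability does not
depend on the chosen finite generating set, `S` is not finitely presented, whereas `T` is.
-/

open Function Subgroup
open scoped commutatorElement

namespace FreeGroup

variable {α β G : Type*} [Group G]

theorem commute_lift_lift {f : α → G} {g : β → G} (h : ∀ a b, Commute (f a) (g b))
    (u : FreeGroup α) (v : FreeGroup β) : Commute (lift f u) (lift g v) := by
  have hle : (lift f).range ≤ centralizer (lift g).range := by
    rw [range_lift_eq_closure, range_lift_eq_closure, centralizer_closure, closure_le]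
    rintro _ ⟨a, rfl⟩ _ ⟨b, rfl⟩
    exact (h a b).symm
  exact (mem_centralizer_iff.mp (hle ⟨u, rfl⟩) _ ⟨v, rfl⟩).symm

def freeGroupCongrHom : Equiv.Perm α →* MulAut (FreeGroup α) where
  toFun := freeGroupCongr
  map_one' := freeGroupCongr_refl
  map_mul' σ τ := (freeGroupCongr_trans τ σ).symm

def sumToProd : FreeGroup (α ⊕ β) →* FreeGroup α × FreeGroup β :=
  lift (Sum.elim (fun a => (of a, 1)) (fun b => (1, of b)))

theorem sumToProd_surjective : Surjective (sumToProd : FreeGroup (α ⊕ β) →* _) := by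
  rintro ⟨u, v⟩
  have hl : sumToProd.comp (map Sum.inl) = MonoidHom.inl (FreeGroup α) (FreeGroup β) :=
    ext_hom _ _ fun a => by simp [sumToProd]
  have hr : sumToProd.comp (map Sum.inr) = MonoidHom.inr (FreeGroup α) (FreeGroup β) :=
    ext_hom _ _ fun b => by simp [sumToProd]
  exact ⟨map Sum.inl u * map Sum.inr v, by simp [← MonoidHom.comp_apply, hl, hr]⟩

theorem ker_sumToProd : (sumToProd : FreeGroup (α ⊕ β) →* _).ker = normalClosure
    (Set.range fun p : α × β => ⁅of (Sum.inl p.1 : α ⊕ β), of (Sum.inr p.2 : α ⊕ β)⁆) := by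
  set N := normalClosure (Set.range fun p : α × β =>
    ⁅of (Sum.inl p.1 : α ⊕ β), of (Sum.inr p.2 : α ⊕ β)⁆)
  refine le_antisymm ?_ (normalClosure_le_normal ?_)
  · let mk := QuotientGroup.mk' N
    have hcomm : ∀ a b, Commute (mk (of (Sum.inl a))) (mk (of (Sum.inr b))) := fun a b => by
      rw [← commutatorElement_eq_one_iff_commute, ← map_commutatorElement, QuotientGroup.mk'_apply,
        QuotientGroup.eq_one_iff]
      exact subset_normalClosure ⟨(a, b), rfl⟩
    let ψ := (lift fun a => mk (of (Sum.inl a))).noncommCoprod (lift fun b => mk (of (Sum.inr b)))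
      (commute_lift_lift hcomm)
    have hψ : ψ.comp sumToProd = mk := by
      ext (a | b) <;> simp [ψ, sumToProd]
    intro x hx
    refine (QuotientGroup.eq_one_iff x).mp ?_
    change mk x = 1
    rw [← hψ, MonoidHom.comp_apply, hx, _root_.map_one]
  · rintro _ ⟨⟨a, b⟩, rfl⟩
    simp [sumToProd, commutatorElement_def]

instance isFinitelyPresented_prod [Finite α] [Finite β] :
    Group.IsFinitelyPresented (FreeGroup α × FreeGroup β) :=
  .of_surjective sumToProd sumToProd_surjective ⟨_, Set.finite_range _, ker_sumToProd.symm⟩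

end FreeGroup

theorem Group.isFinitelyPresented'_iff (A : Type*) [Group A] :
    Group.IsFinitelyPresented' A ↔ Group.IsFinitelyPresented A :=
  ⟨fun ⟨n, π, hπ, s, hs⟩ => ⟨n, π, hπ, s, s.finite_toSet, hs⟩,
    fun ⟨n, π, hπ, s, hs, hsπ⟩ => ⟨n, π, hπ, hs.toFinset, by rwa [Set.Finite.coe_toFinset]⟩⟩

theorem Group.IsFinitelyPresented.isFinitelyNormallyGenerated_ker {G β : Type*} [Group G]
    [hG : Group.IsFinitelyPresented G] [Finite β] {ρ : FreeGroup β →* G} (hρ : Surjective ρ) :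
    ρ.ker.IsFinitelyNormallyGenerated := by
  obtain ⟨n, φ, hφ, R, hR, hRφ⟩ := hG.out
  choose h' hh' using fun i => hρ (φ (FreeGroup.of i))
  choose k' hk' using fun j => hφ (ρ (FreeGroup.of j))
  set h := FreeGroup.lift h'
  set k := FreeGroup.lift k'
  have hρh : ρ.comp h = φ := FreeGroup.ext_hom _ _ fun i => by simp [h, hh']
  have hφk : φ.comp k = ρ := FreeGroup.ext_hom _ _ fun j => by simp [k, hk']
  -- Tietze: the `h`-images of the relators of `G` and the `xⱼ⁻¹ h (k xⱼ)` normally generate `ker ρ`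
  refine ⟨h '' R ∪ Set.range fun j => (FreeGroup.of j)⁻¹ * h (k (FreeGroup.of j)),
    (hR.image h).union (Set.finite_range _), le_antisymm (normalClosure_le_normal ?_) ?_⟩
  · rintro _ (⟨r, hr, rfl⟩ | ⟨j, rfl⟩)
    · rw [SetLike.mem_coe, MonoidHom.mem_ker, ← MonoidHom.comp_apply, hρh, ← MonoidHom.mem_ker,
        ← hRφ]
      exact subset_normalClosure hr
    · simp [← MonoidHom.comp_apply ρ h, hρh, ← MonoidHom.comp_apply φ k, hφk]
  · set N := normalClosure (h '' R ∪ Set.range fun j => (FreeGroup.of j)⁻¹ * h (k (FreeGroup.of j)))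
    have hhk : (QuotientGroup.mk' N).comp (h.comp k) = QuotientGroup.mk' N :=
      FreeGroup.ext_hom _ _ fun j => by
        simp only [MonoidHom.comp_apply, QuotientGroup.mk'_apply]
        exact (QuotientGroup.eq.mpr (subset_normalClosure (.inr ⟨j, rfl⟩))).symm
    intro x hx
    have hkx : k x ∈ normalClosure R := by
      rwa [hRφ, MonoidHom.mem_ker, ← MonoidHom.comp_apply, hφk]
    have hhkx : h (k x) ∈ N :=
      normalClosure_mono Set.subset_union_left (map_normalClosure_le R h ⟨_, hkx, rfl⟩)
    refine (QuotientGroup.eq_one_iff x).mp ?_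
    change QuotientGroup.mk' N x = 1
    rw [← hhk, MonoidHom.comp_apply, MonoidHom.comp_apply, QuotientGroup.mk'_apply,
      QuotientGroup.eq_one_iff]
    exact hhkx

theorem Subgroup.exists_normalClosure_iUnion_le {G : Type*} [Group G] {s : ℕ → Set G}
    (hs : Monotone s) (h : (normalClosure (⋃ n, s n)).IsFinitelyNormallyGenerated) :
    ∃ n, normalClosure (⋃ n, s n) ≤ normalClosure (s n) := by
  obtain ⟨R, hR, hRs⟩ := h
  have hdir : Directed (· ≤ ·) fun n => normalClosure (s n) :=
    Monotone.directed_le fun _ _ hnm => normalClosure_mono (hs hnm)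
  have hsup : normalClosure (⋃ n, s n) ≤ ⨆ n, normalClosure (s n) :=
    normalClosure_le_normal (Set.iUnion_subset fun n => subset_normalClosure.trans
      (le_iSup (fun n => normalClosure (s n)) n))
  choose! m hm using fun r (hr : r ∈ R) =>
    (mem_iSup_of_directed hdir).mp (hsup (hRs ▸ subset_normalClosure hr))
  obtain ⟨n, hn⟩ := (hR.image m).bddAbove
  exact ⟨n, hRs ▸ normalClosure_le_normal fun r hr =>
    normalClosure_mono (hs (hn ⟨r, hr, rfl⟩)) (hm r hr)⟩

open Multiplicative

theorem ofAdd_one_zpow_toAdd (k : Multiplicative ℤ) : ofAdd (1 : ℤ) ^ k.toAdd = k := by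
  rw [← ofAdd_zsmul, smul_eq_mul, mul_one, ofAdd_toAdd]

open FreeGroup (of)

namespace Stallings

def shift : Multiplicative ℤ →* MulAut (FreeGroup ℤ) :=
  FreeGroup.freeGroupCongrHom.comp (MulAction.toPermHom (Multiplicative ℤ) ℤ)

@[simp]
theorem shift_of (k : Multiplicative ℤ) (i : ℤ) : shift k (of i) = of (k.toAdd + i) := rfl

def shift₂ : Multiplicative ℤ →* MulAut (FreeGroup ℤ × FreeGroup ℤ) where
  toFun k := (shift k).prodCongr (shift k)
  map_one' := MulEquiv.ext fun _ => by simp only [map_one]; rfl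
  map_mul' _ _ := MulEquiv.ext fun _ => by simp only [map_mul]; rfl

@[simp]
theorem shift₂_apply (k : Multiplicative ℤ) (p : FreeGroup ℤ × FreeGroup ℤ) :
    shift₂ k p = (shift k p.1, shift k p.2) := rfl

abbrev ShiftSemidirect := FreeGroup ℤ ⋊[shift] Multiplicative ℤ

abbrev ShiftSemidirect₂ := (FreeGroup ℤ × FreeGroup ℤ) ⋊[shift₂] Multiplicative ℤ

section conjugates

variable {Q Q' : Type*} [Group Q] [Group Q']

def conjugates (τ ξ : Q) : FreeGroup ℤ →* Q := FreeGroup.lift fun i => τ ^ i * ξ * (τ ^ i)⁻¹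

@[simp]
theorem conjugates_of (τ ξ : Q) (i : ℤ) : conjugates τ ξ (of i) = τ ^ i * ξ * (τ ^ i)⁻¹ :=
  FreeGroup.lift_apply_of

theorem comp_conjugates (f : Q →* Q') (τ ξ : Q) :
    f.comp (conjugates τ ξ) = conjugates (f τ) (f ξ) :=
  FreeGroup.ext_hom _ _ fun i => by simp

@[simp]
theorem conjugates_one (τ : Q) : conjugates τ 1 = 1 :=
  FreeGroup.ext_hom _ _ fun i => by simp

theorem conjugates_prod (τ₁ ξ₁ : Q) (τ₂ ξ₂ : Q') (u : FreeGroup ℤ) :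
    conjugates (τ₁, τ₂) (ξ₁, ξ₂) u = (conjugates τ₁ ξ₁ u, conjugates τ₂ ξ₂ u) := by
  ext
  · exact DFunLike.congr_fun (comp_conjugates (MonoidHom.fst Q Q') _ _) u
  · exact DFunLike.congr_fun (comp_conjugates (MonoidHom.snd Q Q') _ _) u

theorem conjugates_shift (τ ξ : Q) (k : Multiplicative ℤ) (u : FreeGroup ℤ) :
    conjugates τ ξ (shift k u) = MulAut.conj (τ ^ k.toAdd) (conjugates τ ξ u) := by
  suffices (conjugates τ ξ).comp (shift k).toMonoidHom =
      (MulAut.conj (τ ^ k.toAdd)).toMonoidHom.comp (conjugates τ ξ) from DFunLike.congr_fun this u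
  refine FreeGroup.ext_hom _ _ fun i => ?_
  simp only [MonoidHom.comp_apply, MulEquiv.coe_toMonoidHom, shift_of, conjugates_of,
    MulAut.conj_apply, zpow_add]
  group

theorem conjugates_mem {H : Subgroup Q} {τ ξ : Q} (hτ : τ ∈ H) (hξ : ξ ∈ H) (u : FreeGroup ℤ) :
    conjugates τ ξ u ∈ H :=
  FreeGroup.range_lift_le (by
    rintro _ ⟨i, rfl⟩
    exact H.mul_mem (H.mul_mem (H.zpow_mem hτ i) hξ) (H.inv_mem (H.zpow_mem hτ i))) ⟨u, rfl⟩

theorem commute_conjugates {τ ξ η : Q} (h : ∀ i : ℤ, Commute (τ ^ i * ξ * (τ ^ i)⁻¹) η)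
    (u v : FreeGroup ℤ) : Commute (conjugates τ ξ u) (conjugates τ η v) :=
  FreeGroup.commute_lift_lift (fun i j => by
    have := (h (i - j)).map (MulAut.conj (τ ^ j))
    simp only [MulAut.conj_apply] at this
    convert this using 1
    group) u v

end conjugates

section lift

variable {Q : Type*} [Group Q]

def ShiftSemidirect.lift (τ ξ : Q) : ShiftSemidirect →* Q :=
  SemidirectProduct.lift (conjugates τ ξ) (zpowersHom Q τ) fun k =>
    MonoidHom.ext fun u => by simp [conjugates_shift]

def ShiftSemidirect₂.lift (τ ξ η : Q) (h : ∀ i : ℤ, Commute (τ ^ i * ξ * (τ ^ i)⁻¹) η) :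
    ShiftSemidirect₂ →* Q :=
  SemidirectProduct.lift ((conjugates τ ξ).noncommCoprod (conjugates τ η) (commute_conjugates h))
    (zpowersHom Q τ) fun k => MonoidHom.ext fun p => by simp [conjugates_shift]

variable {τ ξ η : Q} {h : ∀ i : ℤ, Commute (τ ^ i * ξ * (τ ^ i)⁻¹) η}

theorem ShiftSemidirect₂.lift_inl_mul_inr (p : FreeGroup ℤ × FreeGroup ℤ) (k : Multiplicative ℤ) :
    lift τ ξ η h (.inl p * .inr k) = conjugates τ ξ p.1 * conjugates τ η p.2 * τ ^ k.toAdd := by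
  simp [lift]

theorem ShiftSemidirect₂.range_lift_le {H : Subgroup Q} (hτ : τ ∈ H) (hξ : ξ ∈ H) (hη : η ∈ H) :
    (lift τ ξ η h).range ≤ H := by
  rintro _ ⟨m, rfl⟩
  rw [← SemidirectProduct.inl_left_mul_inr_right m, lift_inl_mul_inr]
  exact H.mul_mem (H.mul_mem (conjugates_mem hτ hξ _) (conjugates_mem hτ hη _))
    (H.zpow_mem hτ _)

end lift

section freeGroupTwo

variable {s t : Fin 2}

def toFreeGroup (s t : Fin 2) : ShiftSemidirect →* FreeGroup (Fin 2) :=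
  ShiftSemidirect.lift (of s) (of t)

def ofFreeGroup (s : Fin 2) : FreeGroup (Fin 2) →* ShiftSemidirect :=
  FreeGroup.lift fun i => if i = s then .inr (ofAdd 1) else .inl (of 0)

def shiftSemidirectEquiv (hst : s ≠ t) : ShiftSemidirect ≃* FreeGroup (Fin 2) :=
  MonoidHom.toMulEquiv (toFreeGroup s t) (ofFreeGroup s)
    (SemidirectProduct.hom_ext (FreeGroup.ext_hom _ _ fun i => by
        simp only [toFreeGroup, ofFreeGroup, ShiftSemidirect.lift, MonoidHom.comp_apply,
          SemidirectProduct.lift_inl, conjugates_of, map_mul, map_inv, map_zpow,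
          FreeGroup.lift_apply_of, if_pos, if_neg hst.symm]
        simp [← map_zpow, ← map_inv, ← SemidirectProduct.inl_aut])
      (MonoidHom.ext_mint (by simp [toFreeGroup, ofFreeGroup, ShiftSemidirect.lift])))
    (FreeGroup.ext_hom _ _ fun i => by
      fin_cases s <;> fin_cases t <;> fin_cases i <;>
        simp_all [toFreeGroup, ofFreeGroup, ShiftSemidirect.lift])

theorem shiftSemidirectEquiv_inl (hst : s ≠ t) (u : FreeGroup ℤ) :
    shiftSemidirectEquiv hst (.inl u) = conjugates (of s) (of t) u := by
  simp [shiftSemidirectEquiv, toFreeGroup, ShiftSemidirect.lift]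

def expSum (s : Fin 2) : FreeGroup (Fin 2) →* Multiplicative ℤ :=
  FreeGroup.lift (Pi.mulSingle s (ofAdd 1))

@[simp]
theorem expSum_of_self (s : Fin 2) : expSum s (of s) = ofAdd 1 := by
  simp [expSum]

@[simp]
theorem expSum_of_of_ne {i : Fin 2} (h : i ≠ s) : expSum s (of i) = 1 := by
  simp [expSum, Pi.mulSingle_eq_of_ne h]

theorem expSum_shiftSemidirectEquiv (hst : s ≠ t) (m : ShiftSemidirect) :
    expSum s (shiftSemidirectEquiv hst m) = m.right := by
  suffices (expSum s).comp (toFreeGroup s t) = SemidirectProduct.rightHom from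
    DFunLike.congr_fun this m
  refine SemidirectProduct.hom_ext (FreeGroup.ext_hom _ _ fun i => ?_) (MonoidHom.ext_mint ?_) <;>
    simp [toFreeGroup, ShiftSemidirect.lift, hst.symm]

theorem expSum_conjugates (hst : s ≠ t) (u : FreeGroup ℤ) :
    expSum s (conjugates (of s) (of t) u) = 1 := by
  rw [← shiftSemidirectEquiv_inl hst, expSum_shiftSemidirectEquiv, SemidirectProduct.right_inl]

theorem injective_conjugates (hst : s ≠ t) :
    Injective (conjugates (of s) (of t : FreeGroup (Fin 2))) := by
  rw [show ⇑(conjugates (of s) (of t)) = shiftSemidirectEquiv hst ∘ SemidirectProduct.inl from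
    funext fun u => (shiftSemidirectEquiv_inl hst u).symm]
  exact (shiftSemidirectEquiv hst).injective.comp SemidirectProduct.inl_injective

theorem mem_range_conjugates (hst : s ≠ t) {u : FreeGroup (Fin 2)} (hu : expSum s u = 1) :
    u ∈ (conjugates (of s) (of t)).range := by
  obtain ⟨m, rfl⟩ := (shiftSemidirectEquiv hst).surjective u
  rw [expSum_shiftSemidirectEquiv] at hu
  refine ⟨m.left, ?_⟩
  rw [← shiftSemidirectEquiv_inl hst, ← SemidirectProduct.inl_left_mul_inr_right m, hu]
  simp

end freeGroupTwo

def embed : ShiftSemidirect₂ →* FreeGroup (Fin 2) × FreeGroup (Fin 2) :=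
  ShiftSemidirect₂.lift (of 1, of 0) (of 0, 1) (1, of 1) fun _ =>
    Prod.commute_iff.mpr ⟨Commute.one_right _, by simp⟩

theorem embed_inl_mul_inr (p : FreeGroup ℤ × FreeGroup ℤ) (k : Multiplicative ℤ) :
    embed (.inl p * .inr k) = (conjugates (of 1) (of 0) p.1 * of 1 ^ k.toAdd,
      conjugates (of 0) (of 1) p.2 * of 0 ^ k.toAdd) := by
  rw [embed, ShiftSemidirect₂.lift_inl_mul_inr]
  simp [conjugates_prod]

theorem injective_embed : Injective embed := by
  rw [injective_iff_map_eq_one]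
  intro m hm
  rw [← SemidirectProduct.inl_left_mul_inr_right m, embed_inl_mul_inr, Prod.mk_eq_one] at hm
  obtain ⟨h₁, h₂⟩ := hm
  have hk : m.right = 1 := by
    have := congrArg (expSum 1) h₁
    rwa [map_mul, expSum_conjugates (by decide), map_zpow, expSum_of_self,
      ofAdd_one_zpow_toAdd, one_mul, map_one] at this
  simp only [hk, toAdd_one, zpow_zero, mul_one] at h₁ h₂
  rw [← SemidirectProduct.inl_left_mul_inr_right m, hk,
    show m.left = 1 from Prod.ext (injective_conjugates (by decide) (h₁.trans (map_one _).symm))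
      (injective_conjugates (by decide) (h₂.trans (map_one _).symm))]
  simp

theorem range_embed_le : embed.range ≤ stallingsSubgroup :=
  ShiftSemidirect₂.range_lift_le (subset_closure (by simp)) (subset_closure (by simp))
    (subset_closure (by simp))

def expSumDiff : FreeGroup (Fin 2) × FreeGroup (Fin 2) →* Multiplicative ℤ :=
  (expSum 1).coprod (expSum 0)⁻¹

theorem surjective_expSumDiff : Surjective expSumDiff := fun k =>
  ⟨(of 1 ^ k.toAdd, 1), by simp [expSumDiff, ofAdd_one_zpow_toAdd]⟩

theorem stallingsSubgroup_le_ker_expSumDiff : stallingsSubgroup ≤ expSumDiff.ker := by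
  rw [stallingsSubgroup, closure_le]
  rintro _ (rfl | rfl | rfl) <;> simp [expSumDiff]

theorem ker_expSumDiff_le_range_embed : expSumDiff.ker ≤ embed.range := by
  rintro ⟨u, v⟩ huv
  have hvu : expSum 0 v = expSum 1 u := (mul_inv_eq_one.mp huv).symm
  set k := expSum 1 u
  obtain ⟨p, hp⟩ := mem_range_conjugates (s := 1) (t := 0) (by decide)
    (u := u * of 1 ^ (-k.toAdd)) (by simp [k, ofAdd_one_zpow_toAdd])
  obtain ⟨q, hq⟩ := mem_range_conjugates (s := 0) (t := 1) (by decide)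
    (u := v * of 0 ^ (-k.toAdd)) (by simp [hvu, ofAdd_one_zpow_toAdd])
  refine ⟨.inl (p, q) * .inr k, ?_⟩
  simp [embed_inl_mul_inr, hp, hq]

theorem ker_expSumDiff : expSumDiff.ker = stallingsSubgroup :=
  le_antisymm (ker_expSumDiff_le_range_embed.trans range_embed_le)
    stallingsSubgroup_le_ker_expSumDiff

def presentation : FreeGroup (Fin 3) →* FreeGroup (Fin 2) × FreeGroup (Fin 2) :=
  FreeGroup.lift ![(of 0, 1), (of 1, of 0), (1, of 1)]

theorem range_presentation : presentation.range = stallingsSubgroup := by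
  rw [presentation, FreeGroup.range_lift_eq_closure, stallingsSubgroup, Matrix.range_cons,
    Matrix.range_cons, Matrix.range_cons, Matrix.range_empty]
  simp only [Set.singleton_union, Set.union_empty]

def relator (i : ℤ) : FreeGroup (Fin 3) :=
  ⁅(of 1 ^ i * of 0 * (of 1 ^ i)⁻¹ : FreeGroup (Fin 3)), of 2⁆

def toShiftSemidirect₂ : FreeGroup (Fin 3) →* ShiftSemidirect₂ :=
  FreeGroup.lift ![.inl (of 0, 1), .inr (ofAdd 1), .inl (1, of 0)]

theorem embed_comp_toShiftSemidirect₂ : embed.comp toShiftSemidirect₂ = presentation := by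
  refine FreeGroup.ext_hom _ _ fun i => ?_
  fin_cases i <;> simp [toShiftSemidirect₂, presentation, embed, ShiftSemidirect₂.lift]

def toRelatorQuotient :
    ShiftSemidirect₂ →* FreeGroup (Fin 3) ⧸ normalClosure (Set.range relator) :=
  ShiftSemidirect₂.lift (QuotientGroup.mk' _ (of 1)) (QuotientGroup.mk' _ (of 0))
    (QuotientGroup.mk' _ (of 2)) fun i => by
      have := (QuotientGroup.eq_one_iff (relator i)).mpr
        (subset_normalClosure (Set.mem_range_self i))
      rwa [relator, ← QuotientGroup.mk'_apply, map_commutatorElement,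
        commutatorElement_eq_one_iff_commute, map_mul, map_mul, map_inv, map_zpow] at this

theorem toRelatorQuotient_comp_toShiftSemidirect₂ :
    toRelatorQuotient.comp toShiftSemidirect₂ = QuotientGroup.mk' _ := by
  refine FreeGroup.ext_hom _ _ fun i => ?_
  fin_cases i <;> simp [toShiftSemidirect₂, toRelatorQuotient, ShiftSemidirect₂.lift]

theorem ker_presentation : presentation.ker = normalClosure (Set.range relator) := by
  -- both `presentation` (through the injective `embed`) and the quotient map by the relators
  -- factor through `toShiftSemidirect₂`
  refine le_antisymm (fun x hx => ?_) (normalClosure_le_normal ?_)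
  · have hx' : toShiftSemidirect₂ x = 1 := injective_embed (by
      rw [← MonoidHom.comp_apply, embed_comp_toShiftSemidirect₂, hx, map_one])
    rw [← QuotientGroup.eq_one_iff, ← QuotientGroup.mk'_apply,
      ← toRelatorQuotient_comp_toShiftSemidirect₂, MonoidHom.comp_apply, hx', map_one]
  · rintro _ ⟨i, rfl⟩
    simp [relator, presentation, commutatorElement_def]

def permRep (n : ℕ) : FreeGroup (Fin 3) →* Equiv.Perm ℤ :=
  FreeGroup.lift ![Equiv.swap 0 1, MulAction.toPermHom (Multiplicative ℤ) ℤ (ofAdd 1),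
    Equiv.swap (n + 2) (n + 3)]

theorem permRep_relator (n : ℕ) (i : ℤ) :
    permRep n (relator i) = ⁅Equiv.swap i (i + 1), Equiv.swap ((n : ℤ) + 2) (n + 3)⁆ := by
  have ht : ∀ j : ℤ, (MulAction.toPerm (ofAdd (1 : ℤ)) ^ i : Equiv.Perm ℤ) j = i + j := fun j => by
    change (MulAction.toPermHom (Multiplicative ℤ) ℤ (ofAdd 1) ^ i) j = i + j
    rw [← map_zpow, ← ofAdd_zsmul]
    simp
  simp only [permRep, relator, map_commutatorElement, map_mul, map_inv, map_zpow,
    FreeGroup.lift_apply_of]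
  simp [← Equiv.swap_apply_apply, ht]

theorem permRep_relator_of_le {n : ℕ} {i : ℤ} (hi : i ≤ n) : permRep n (relator i) = 1 := by
  rw [permRep_relator, commutatorElement_eq_one_iff_commute]
  exact (Equiv.Perm.disjoint_swap_swap (by simp; omega)).commute

theorem permRep_relator_ne_one (n : ℕ) : permRep n (relator (n + 1)) ≠ 1 := by
  intro h
  rw [permRep_relator, add_assoc, one_add_one_eq_two] at h
  have := congrArg (· ((n : ℤ) + 2)) h
  simp [commutatorElement_def, Equiv.swap_apply_of_ne_of_ne] at this

theorem not_isFinitelyNormallyGenerated_relators :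
    ¬ (normalClosure (Set.range relator)).IsFinitelyNormallyGenerated := by
  have hU : Set.range relator = ⋃ n : ℕ, relator '' Set.Iic (n : ℤ) := by
    ext r
    simp only [Set.mem_range, Set.mem_iUnion, Set.mem_image, Set.mem_Iic]
    exact ⟨fun ⟨i, hi⟩ => ⟨i.toNat, i, Int.self_le_toNat i, hi⟩, fun ⟨_, i, _, hi⟩ => ⟨i, hi⟩⟩
  rw [hU]
  intro h
  obtain ⟨n, hn⟩ := exists_normalClosure_iUnion_le (fun m n hmn =>
    Set.image_mono (Set.Iic_subset_Iic.mpr (by exact_mod_cast hmn))) h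
  have hker : normalClosure (relator '' Set.Iic (n : ℤ)) ≤ (permRep n).ker := by
    refine normalClosure_le_normal ?_
    rintro _ ⟨i, hi, rfl⟩
    exact permRep_relator_of_le hi
  refine permRep_relator_ne_one n (hker (hn (subset_normalClosure ?_)))
  rw [← hU]
  exact Set.mem_range_self _

def presentationOnto : FreeGroup (Fin 3) →* stallingsSubgroup :=
  presentation.codRestrict _ fun x => range_presentation ▸ ⟨x, rfl⟩

theorem surjective_presentationOnto : Surjective presentationOnto := by
  rintro ⟨y, hy⟩
  rw [← range_presentation] at hy
  obtain ⟨x, rfl⟩ := hy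
  exact ⟨x, rfl⟩

theorem not_isFinitelyPresented_stallingsSubgroup :
    ¬ Group.IsFinitelyPresented stallingsSubgroup := fun _ => by
  have := Group.IsFinitelyPresented.isFinitelyNormallyGenerated_ker surjective_presentationOnto
  rw [presentationOnto, MonoidHom.ker_codRestrict, ker_presentation] at this
  exact not_isFinitelyNormallyGenerated_relators this

end Stallings

theorem stallings_example :
    stallingsSubgroup.Normal ∧
    (∃ f : FreeGroup (Fin 2) × FreeGroup (Fin 2) →* Multiplicative ℤ,
      Function.Surjective f ∧ f.ker = stallingsSubgroup) ∧
    Group.IsFinitelyPresented' (FreeGroup (Fin 2) × FreeGroup (Fin 2)) ∧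
    ¬ Group.IsFinitelyPresented' stallingsSubgroup ∧
    ¬ (∀ H : Subgroup (FreeGroup (Fin 2) × FreeGroup (Fin 2)),
        Group.FG H → Group.IsFinitelyPresented' H) := by
  have hS : ¬ Group.IsFinitelyPresented' stallingsSubgroup := by
    rw [Group.isFinitelyPresented'_iff]
    exact Stallings.not_isFinitelyPresented_stallingsSubgroup
  refine ⟨Stallings.ker_expSumDiff ▸ Stallings.expSumDiff.normal_ker,
    ⟨Stallings.expSumDiff, Stallings.surjective_expSumDiff, Stallings.ker_expSumDiff⟩,
    (Group.isFinitelyPresented'_iff _).mpr inferInstance, hS, fun h => hS (h _ ?_)⟩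
  exact Group.fg_of_surjective Stallings.surjective_presentationOnto
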